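/- Assume P = Q = 0 and λ ≠ 0. Then the complexified Maurer–Cartan coefficients of the extended Wilczynski frame of a Demoulin surface satisfy the Lorentz primitivity conditions for the order-six automorphism κ(X) = −J₁ (E X E⁻¹)ᵗ J₁ of sl₄(ℂ): the λ-independent parts U₀ = diag(u, −u, u, −u) and V₀ = diag(v, v, −v, −v) satisfy κ(U₀) = U₀ and κ(V₀) = V₀ (they lie in the 0-eigenspace 𝔤₀), the coefficient U₋₁ of λ⁻¹ in U^λ satisfies κ(U₋₁) = (−ε)⁻¹ U₋₁ (it lies in the eigenspace 𝔤₋₁), and the coefficient V₁ of λ in V^λ satisfies κ(V₁) = (−ε) V₁ (it lies in the eigenspace 𝔤₁). -/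

import Mathlib

open Matrix

noncomputable section

/-- The primitive cube root of unity `ε = e^{2πi/3}`. -/
def ε : ℂ := Complex.exp (2 * Real.pi * Complex.I / 3)

/-- `E = diag(1, ε², ε, 1)`. -/
def Emat : Matrix (Fin 4) (Fin 4) ℂ := Matrix.diagonal ![1, ε ^ 2, ε, 1]

/-- The antidiagonal matrix `J₁ = offdiag(1,1,1,1)`. -/
def J₁ : Matrix (Fin 4) (Fin 4) ℂ := !![0,0,0,1; 0,0,1,0; 0,1,0,0; 1,0,0,0]

/-- `U^λ` of the loop-parameter family with `P = Q = 0` (pointwise data, `u = c_x/(2c)`). -/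
def Uloop (b k u : ℝ) (lam : ℂ) : Matrix (Fin 4) (Fin 4) ℂ :=
  !![(u : ℂ), 0, lam⁻¹ * (k : ℂ), 0;
     lam⁻¹, -(u : ℂ), 0, lam⁻¹ * (k : ℂ);
     0, lam⁻¹ * (b : ℂ), (u : ℂ), 0;
     0, 0, lam⁻¹, -(u : ℂ)]

/-- `V^λ` of the loop-parameter family with `P = Q = 0` (pointwise data, `v = b_y/(2b)`). -/
def Vloop (c ℓ v : ℝ) (lam : ℂ) : Matrix (Fin 4) (Fin 4) ℂ :=
  !![(v : ℂ), lam * (ℓ : ℂ), 0, 0;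
     0, (v : ℂ), lam * (c : ℂ), 0;
     lam, 0, -(v : ℂ), lam * (ℓ : ℂ);
     0, lam, 0, -(v : ℂ)]

/-- The order-six automorphism `κ(X) = −J₁ (E X E⁻¹)ᵗ J₁`. -/
def κ (X : Matrix (Fin 4) (Fin 4) ℂ) : Matrix (Fin 4) (Fin 4) ℂ :=
  -(J₁ * (Emat * X * Emat⁻¹)ᵀ * J₁)

private lemma diag4 (a b c d : ℂ) :
    Matrix.diagonal ![a, b, c, d] = !![a,0,0,0; 0,b,0,0; 0,0,c,0; 0,0,0,d] := by
  ext i j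
  fin_cases i <;> fin_cases j <;>
    simp [Matrix.diagonal, Matrix.vecHead, Matrix.vecTail]

set_option maxHeartbeats 8000000 in
/-- Lorentz primitivity for a Demoulin surface (`P = Q = 0`): writing
`U^λ = U₀ + λ⁻¹ U₋₁` and `V^λ = V₀ + λ V₁`, the parts `U₀, V₀` lie in the
`0`-eigenspace of `κ` (`κ` fixes them), `U₋₁` lies in the eigenspace `𝔤₋₁`
(`κ(U₋₁) = (−ε)⁻¹ U₋₁`) and `V₁` lies in `𝔤₁` (`κ(V₁) = (−ε) V₁`). -/
theorem lorentz_primitivity (b c k ℓ u v : ℝ) :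
    κ (Matrix.diagonal ![(u : ℂ), -(u : ℂ), (u : ℂ), -(u : ℂ)])
        = Matrix.diagonal ![(u : ℂ), -(u : ℂ), (u : ℂ), -(u : ℂ)] ∧
    κ (Matrix.diagonal ![(v : ℂ), (v : ℂ), -(v : ℂ), -(v : ℂ)])
        = Matrix.diagonal ![(v : ℂ), (v : ℂ), -(v : ℂ), -(v : ℂ)] ∧
    κ !![0, 0, (k : ℂ), 0; 1, 0, 0, (k : ℂ); 0, (b : ℂ), 0, 0; 0, 0, 1, 0]
        = (-ε)⁻¹ • !![0, 0, (k : ℂ), 0; 1, 0, 0, (k : ℂ); 0, (b : ℂ), 0, 0; 0, 0, 1, 0] ∧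
    κ !![0, (ℓ : ℂ), 0, 0; 0, 0, (c : ℂ), 0; 1, 0, 0, (ℓ : ℂ); 0, 1, 0, 0]
        = (-ε) • !![0, (ℓ : ℂ), 0, 0; 0, 0, (c : ℂ), 0; 1, 0, 0, (ℓ : ℂ); 0, 1, 0, 0] := by
  have h3 : ε ^ 3 = 1 := by
    rw [ε, ← Complex.exp_nat_mul]
    rw [show ((3:ℕ):ℂ) * (2 * Real.pi * Complex.I / 3) = 2 * Real.pi * Complex.I by
      push_cast; ring]
    exact Complex.exp_two_pi_mul_I
  have hEinv : Emat⁻¹ = !![1,0,0,0; 0,ε,0,0; 0,0,ε^2,0; 0,0,0,1] := by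
    apply Matrix.inv_eq_right_inv
    rw [Emat, diag4]
    ext i j
    fin_cases i <;> fin_cases j <;>
      simp [Matrix.mul_apply, Matrix.vecMul, dotProduct, Fin.sum_univ_four, Matrix.vecHead, Matrix.vecTail] <;>
      linear_combination h3
  have hinv : (-ε)⁻¹ = -ε ^ 2 := by
    apply inv_eq_of_mul_eq_one_right
    linear_combination h3
  have hE : Emat = !![1,0,0,0; 0,ε^2,0,0; 0,0,ε,0; 0,0,0,1] := by rw [Emat, diag4]
  refine ⟨?_, ?_, ?_, ?_⟩
  · rw [κ, hEinv, hE, J₁, diag4]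
    ext i j
    fin_cases i <;> fin_cases j <;>
      simp [Matrix.mul_apply, Matrix.vecMul, dotProduct, Fin.sum_univ_four, Matrix.vecHead, Matrix.vecTail] <;>
      linear_combination (u:ℂ) * h3
  · rw [κ, hEinv, hE, J₁, diag4]
    ext i j
    fin_cases i <;> fin_cases j <;>
      simp [Matrix.mul_apply, Matrix.vecMul, dotProduct, Fin.sum_univ_four, Matrix.vecHead, Matrix.vecTail] <;>
      linear_combination (v:ℂ) * h3
  · rw [κ, hEinv, hE, J₁]
    ext i j
    fin_cases i <;> fin_cases j <;>
      simp [Matrix.mul_apply, Matrix.vecMul, dotProduct, Fin.sum_univ_four, hinv, Matrix.smul_apply,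
        Matrix.vecHead, Matrix.vecTail] <;>
      first
        | ring1
        | linear_combination h3
        | linear_combination (k:ℂ) * h3
        | linear_combination (b:ℂ) * h3
        | linear_combination -h3
        | linear_combination -(k:ℂ) * h3
        | linear_combination -(b:ℂ) * h3
  · rw [κ, hEinv, hE, J₁]
    ext i j
    fin_cases i <;> fin_cases j <;>
      simp [Matrix.mul_apply, Matrix.vecMul, dotProduct, Fin.sum_univ_four, Matrix.smul_apply,
        Matrix.vecHead, Matrix.vecTail] <;>
      first
        | ring1
        | linear_combination h3
        | linear_combination (c:ℂ) * h3
        | linear_combination (ℓ:ℂ) * h3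
        | linear_combination -h3
        | linear_combination -(c:ℂ) * h3
        | linear_combination ε * (c:ℂ) * h3
        | linear_combination -(ℓ:ℂ) * h3
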